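/- Let P = η I - σ(γ C_Q + d_+ C_W + d_- C_W^*) where η > 0, σ > 0, d_+, d_- ≥ 0 with d_+ + d_- > 0, γ ∈ ℝ, C_Q is a skew-Hermitian matrix (so its eigenvalues are purely imaginary), and C_W is a normal matrix all of whose eigenvalues have strictly negative real part, with C_Q, C_W, C_W^* simultaneously unitarily diagonalizable. Then P is invertible. -/
import Mathlib


theorem stmt19 (n : ℕ) (η σ γ dp dm : ℝ) (hη : 0 < η) (hσ : 0 < σ)
    (hdp : 0 ≤ dp) (hdm : 0 ≤ dm) (hsum : 0 < dp + dm)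
    (U CQ CW : Matrix (Fin n) (Fin n) ℂ)
    (hU : U.conjTranspose * U = 1)
    (hskew : CQ.conjTranspose = -CQ)
    (hnormal : CW.conjTranspose * CW = CW * CW.conjTranspose)
    (q w : Fin n → ℂ)
    (hCQ : CQ = U * Matrix.diagonal q * U.conjTranspose)
    (hCW : CW = U * Matrix.diagonal w * U.conjTranspose)
    (hq : ∀ i, (q i).re = 0) (hw : ∀ i, (w i).re < 0) :
    IsUnit ((η : ℂ) • (1 : Matrix (Fin n) (Fin n) ℂ) -
      (σ : ℂ) • ((γ : ℂ) • CQ + (dp : ℂ) • CW + (dm : ℂ) • CW.conjTranspose)) := by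
  have hUU : U * U.conjTranspose = 1 := mul_eq_one_comm.mp hU
  set d : Fin n → ℂ := fun i =>
    (η : ℂ) - (σ : ℂ) * ((γ : ℂ) * q i + (dp : ℂ) * w i + (dm : ℂ) * star (w i)) with hd
  have key : (η : ℂ) • (1 : Matrix (Fin n) (Fin n) ℂ) -
      (σ : ℂ) • ((γ : ℂ) • CQ + (dp : ℂ) • CW + (dm : ℂ) • CW.conjTranspose) =
      U * Matrix.diagonal d * U.conjTranspose := by
    have hdiag : Matrix.diagonal d =
        (η : ℂ) • (1 : Matrix (Fin n) (Fin n) ℂ) -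
        (σ : ℂ) • ((γ : ℂ) • Matrix.diagonal q + (dp : ℂ) • Matrix.diagonal w +
          (dm : ℂ) • Matrix.diagonal (fun i => star (w i))) := by
      ext i j
      rcases eq_or_ne i j with rfl | hne
      · simp [Matrix.diagonal_apply_eq, Matrix.one_apply_eq, hd]
        ring
      · simp [Matrix.diagonal_apply_ne _ hne, Matrix.one_apply_ne hne]
    have hCWt : CW.conjTranspose = U * Matrix.diagonal (fun i => star (w i)) * U.conjTranspose := by
      rw [hCW]
      simp [Matrix.conjTranspose_mul, Matrix.diagonal_conjTranspose, Matrix.mul_assoc,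
        Pi.star_def]
    rw [hdiag, hCQ, hCWt, hCW]
    simp only [Matrix.mul_sub, Matrix.sub_mul, Matrix.mul_add, Matrix.add_mul,
      Matrix.mul_smul, Matrix.smul_mul, Matrix.mul_one]
    rw [hUU]
  rw [key]
  have hdetU : U.det * U.conjTranspose.det = 1 := by
    rw [← Matrix.det_mul, hUU, Matrix.det_one]
  have hdne : ∀ i, d i ≠ 0 := by
    intro i h
    have hre : (d i).re = η - σ * ((dp + dm) * (w i).re) := by
      simp only [hd, Complex.sub_re, Complex.mul_re, Complex.add_re, Complex.add_im,
        Complex.mul_im, Complex.ofReal_re, Complex.ofReal_im, Complex.star_def, Complex.conj_re,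
        Complex.conj_im, hq i]
      ring
    have hpos : 0 < (d i).re := by
      rw [hre]
      have hwi := hw i
      nlinarith [mul_pos (mul_pos hσ hsum) (neg_pos.mpr hwi)]
    rw [h] at hpos
    simp at hpos
  rw [Matrix.isUnit_iff_isUnit_det, Matrix.det_mul, Matrix.det_mul, Matrix.det_diagonal]
  refine isUnit_iff_ne_zero.mpr ?_
  have h1 : U.det ≠ 0 := left_ne_zero_of_mul_eq_one hdetU
  have h2 : U.conjTranspose.det ≠ 0 := right_ne_zero_of_mul_eq_one hdetU
  exact mul_ne_zero (mul_ne_zero h1 (Finset.prod_ne_zero_iff.mpr fun i _ => hdne i)) h2
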